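/- arXiv:1908.06161 — 2 statements merged into one kernel-verified Lean document; each statement's English description precedes it below -/
import Mathlib

section
/- For every k ≥ 2, there exists a set A of k positive integers such that gcd(a, b) = |a - b| for all distinct a, b in A. -/
/-!
For integers, `gcd a b = |a - b|` holds exactly when `a - b ∣ a`. This condition survives
translating a pair by any common multiple `L` of its elements, and `L` itself is compatible with
every `L + a` since `a ∣ L`. So `{L} ∪ (L + A)`, with `L = ∏ A`, extends a good set `A` by one
element, starting from `A = ∅`.
-/

theorem Int.gcd_eq_natAbs_sub_iff_sub_dvd {x y : ℤ} :
    Int.gcd x y = (x - y).natAbs ↔ x - y ∣ x := by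
  rw [Int.gcd_comm, ← Int.gcd_self_sub_left, Int.gcd_eq_natAbs, ← Int.natAbs_dvd_natAbs]
  exact Nat.gcd_eq_left_iff_dvd

theorem Nat.gcd_eq_natAbs_sub_iff_sub_dvd {a b : ℕ} :
    Nat.gcd a b = ((a : ℤ) - b).natAbs ↔ (a : ℤ) - b ∣ a := by
  rw [← Int.gcd_natCast_natCast, Int.gcd_eq_natAbs_sub_iff_sub_dvd]

theorem sub_dvd_add_of_sub_dvd {R : Type*} [CommRing R] {a b n : R} (h : a - b ∣ a)
    (hn : b ∣ n) : (n + a) - (n + b) ∣ n + a := by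
  have hb : a - b ∣ b := by simpa using dvd_sub h (dvd_refl (a - b))
  rw [add_sub_add_left_eq_sub]
  exact dvd_add (hb.trans hn) h

def IsGcdDiffSet (A : Finset ℕ) : Prop :=
  (A : Set ℕ).Pairwise fun a b => Nat.gcd a b = ((a : ℤ) - b).natAbs

theorem isGcdDiffSet_empty : IsGcdDiffSet ∅ := by
  simp [IsGcdDiffSet]

theorem IsGcdDiffSet.insert_image_add {A : Finset ℕ} (hA : IsGcdDiffSet A) {L : ℕ}
    (hL : ∀ a ∈ A, a ∣ L) : IsGcdDiffSet (insert L (A.image (L + ·))) := by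
  simp only [IsGcdDiffSet, Nat.gcd_eq_natAbs_sub_iff_sub_dvd, Finset.coe_insert,
    Finset.coe_image, Set.pairwise_insert, Set.forall_mem_image, Nat.cast_add] at hA ⊢
  refine ⟨(add_right_injective L).injOn.pairwise_image.mpr ?_, fun a ha _ => ⟨?_, ?_⟩⟩
  · intro a ha b hb hab
    simpa only [Function.onFun, Nat.cast_add] using
      sub_dvd_add_of_sub_dvd (hA ha hb hab) (Int.natCast_dvd_natCast.mpr (hL b hb))
  · simpa using Int.natCast_dvd_natCast.mpr (hL a ha)
  · simpa using Int.natCast_dvd_natCast.mpr (hL a ha)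

theorem exists_isGcdDiffSet (k : ℕ) :
    ∃ A : Finset ℕ, A.card = k ∧ (∀ a ∈ A, 0 < a) ∧ IsGcdDiffSet A := by
  induction k with
  | zero => exact ⟨∅, rfl, by simp, isGcdDiffSet_empty⟩
  | succ k ih =>
    obtain ⟨A, hcard, hpos, hA⟩ := ih
    set L := ∏ a ∈ A, a
    have hL : 0 < L := Finset.prod_pos hpos
    have hL_notMem : L ∉ A.image (L + ·) := by
      simpa using fun a ha => (hpos a ha).ne'
    refine ⟨insert L (A.image (L + ·)), ?_, ?_,
      hA.insert_image_add fun a ha => Finset.dvd_prod_of_mem id ha⟩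
    · rw [Finset.card_insert_of_notMem hL_notMem,
        Finset.card_image_of_injective _ (add_right_injective L), hcard]
    · simpa using ⟨hL, fun _ _ => Or.inl hL⟩

theorem exists_gcd_diff_set_general (k : ℕ) :
    ∃ A : Finset ℕ, A.card = k ∧ (∀ a ∈ A, 0 < a) ∧
      ∀ a ∈ A, ∀ b ∈ A, a ≠ b → Nat.gcd a b = ((a : ℤ) - (b : ℤ)).natAbs := by
  obtain ⟨A, hcard, hpos, hA⟩ := exists_isGcdDiffSet k
  exact ⟨A, hcard, hpos, fun a ha b hb hab => hA ha hb hab⟩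

/-- For every k ≥ 2 there exists a set A of k positive integers such that
gcd(a, b) = |a - b| for all distinct a, b ∈ A. -/
theorem exists_gcd_diff_set (k : ℕ) (hk : 2 ≤ k) :
    ∃ A : Finset ℕ, A.card = k ∧ (∀ a ∈ A, 0 < a) ∧
      ∀ a ∈ A, ∀ b ∈ A, a ≠ b → Nat.gcd a b = ((a : ℤ) - (b : ℤ)).natAbs :=
  exists_gcd_diff_set_general k
end

section
/- There is no infinite set of primes any two of which form a symmetric pair; equivalently, any set S of odd primes in which every two distinct elements form a symmetric pair is finite. -/
/-- The gcd is at most `p - 1`, so `|p - q| < p`. -/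
theorem Nat.lt_two_mul_of_gcd_sub_one_eq_natAbs_sub {p q : ℕ} (hp : 2 ≤ p)
    (h : Nat.gcd (p - 1) (q - 1) = ((p : ℤ) - (q : ℤ)).natAbs) : q < 2 * p := by
  have hgcd : Nat.gcd (p - 1) (q - 1) ≤ p - 1 := Nat.gcd_le_left _ (by omega)
  omega

/-- Any set of odd primes in which every two distinct elements form a
symmetric pair is finite. -/
theorem symmetric_clique_finite (S : Set ℕ)
    (hprime : ∀ p ∈ S, p.Prime ∧ Odd p)
    (hsym : ∀ p ∈ S, ∀ q ∈ S, p ≠ q →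
      Nat.gcd (p - 1) (q - 1) = ((p : ℤ) - (q : ℤ)).natAbs) :
    S.Finite := by
  obtain rfl | ⟨p, hp⟩ := S.eq_empty_or_nonempty
  · exact Set.finite_empty
  refine (Set.finite_Iio (2 * p)).subset fun q hq => ?_
  obtain rfl | hpq := eq_or_ne p q
  · have := (hprime p hp).1.pos
    exact Set.mem_Iio.2 (by omega)
  · exact Nat.lt_two_mul_of_gcd_sub_one_eq_natAbs_sub (hprime p hp).1.two_le
      (hsym p hp q hq hpq)
end
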